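/- Let H = [[H¹₁₁, H¹₁₂],[H²₂₁, H²₂₂]] be an invertible real 2×2 matrix, and let K₁, K₂ ∈ ℝ and ω > 0 satisfy Assumption 1: |H¹₁₂K₂| < |H¹₁₁K₁|, |H²₂₁K₁| < |H²₂₂K₂|, H¹₁₁K₁ < 0 and H²₂₂K₂ < 0, with α₀ = min(|H¹₁₁K₁| − |H¹₁₂K₂|, |H²₂₂K₂| − |H²₂₁K₁|). Let θ̃ : ℝ → ℝ² be such that Ĝ(t) := H·θ̃(t) is differentiable on [0, ∞) and satisfies dĜ₁/dt = (1/ω)(H¹₁₁K₁ sgn(Ĝ₁(t)) + H¹₁₂K₂ sgn(Ĝ₂(t))) and dĜ₂/dt = (1/ω)(H²₂₁K₁ sgn(Ĝ₁(t)) + H²₂₂K₂ sgn(Ĝ₂(t))) for all t ≥ 0. Then for all t ≥ 0, ‖θ̃(t)‖ ≤ max(‖H⁻¹‖·‖H‖·‖θ̃(0)‖ − ‖H⁻¹‖·(α₀/ω)·t, 0), where ‖·‖ denotes the Euclidean norm on ℝ² and the induced operator norm on matrices; in particular θ̃(t) = 0 for all t ≥ ω‖H‖‖θ̃(0)‖/α₀.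 -/

import Mathlib

open Real Set Matrix

noncomputable def euclOpNorm (M : Matrix (Fin 2) (Fin 2) ℝ) : ℝ :=
  ‖(Matrix.toEuclideanLin M).toContinuousLinearMap‖

lemma mul_sign' (x : ℝ) : x * Real.sign x = |x| := by
  rcases lt_trichotomy x 0 with h | h | h
  · rw [Real.sign_of_neg h, abs_of_neg h]; ring
  · simp [h]
  · rw [Real.sign_of_pos h, abs_of_pos h]; ring

lemma abs_sign_le' (x : ℝ) : |Real.sign x| ≤ 1 := by
  rcases lt_trichotomy x 0 with h | h | h
  · simp [Real.sign_of_neg h]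
  · simp [h]
  · simp [Real.sign_of_pos h]

lemma sqrt_le_abs_add_abs (x y : ℝ) : Real.sqrt (x^2 + y^2) ≤ |x| + |y| := by
  rw [show |x| + |y| = Real.sqrt ((|x| + |y|)^2) from
    (Real.sqrt_sq (by positivity)).symm]
  apply Real.sqrt_le_sqrt
  have := abs_nonneg x; have := abs_nonneg y
  nlinarith [sq_abs x, sq_abs y, mul_nonneg (abs_nonneg x) (abs_nonneg y)]

lemma mul_sign_le (b x y : ℝ) : b * (x * Real.sign y) ≤ |b| * |x| := by
  calc b * (x * Real.sign y) ≤ |b * (x * Real.sign y)| := le_abs_self _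
    _ = |b| * |x| * |Real.sign y| := by rw [abs_mul, abs_mul]; ring
    _ ≤ |b| * |x| * 1 := by
        have := abs_sign_le' y
        have h1 : (0:ℝ) ≤ |b| * |x| := by positivity
        nlinarith
    _ = |b| * |x| := mul_one _

lemma euclNorm_pi (u : Fin 2 → ℝ) :
    ‖(WithLp.equiv 2 (Fin 2 → ℝ)).symm u‖ = Real.sqrt (u 0 ^ 2 + u 1 ^ 2) := by
  rw [EuclideanSpace.norm_eq]
  simp [Fin.sum_univ_two, sq_abs]

lemma mulVec_norm_le (M : Matrix (Fin 2) (Fin 2) ℝ) (x y : ℝ) :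
    Real.sqrt ((M.mulVec ![x, y] 0) ^ 2 + (M.mulVec ![x, y] 1) ^ 2)
      ≤ euclOpNorm M * Real.sqrt (x ^ 2 + y ^ 2) := by
  have h := (Matrix.toEuclideanLin M).toContinuousLinearMap.le_opNorm
      ((WithLp.equiv 2 (Fin 2 → ℝ)).symm ![x, y])
  rw [LinearMap.coe_toContinuousLinearMap'] at h
  rw [show (Matrix.toEuclideanLin M) ((WithLp.equiv 2 (Fin 2 → ℝ)).symm ![x, y])
      = (WithLp.equiv 2 (Fin 2 → ℝ)).symm (M *ᵥ ![x, y]) from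
      Matrix.toEuclideanLin_apply_piLp_toLp M ![x, y]] at h
  rw [euclNorm_pi, euclNorm_pi] at h
  simpa [euclOpNorm] using h

lemma mulVec_two (M : Matrix (Fin 2) (Fin 2) ℝ) (x y : ℝ) :
    M.mulVec ![x, y] = ![M 0 0 * x + M 0 1 * y, M 1 0 * x + M 1 1 * y] := by
  funext i
  fin_cases i <;> simp [Matrix.mulVec, dotProduct, Fin.sum_univ_two]

lemma hasDerivAt_mul_abs (y : ℝ) : HasDerivAt (fun x : ℝ => x * |x|) (2 * |y|) y := by
  rcases lt_trichotomy y 0 with h | h | h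
  · have : HasDerivAt (fun x : ℝ => -(x * x)) (2 * |y|) y := by
      rw [abs_of_neg h]
      exact ((hasDerivAt_id' y).mul (hasDerivAt_id' y)).neg.congr_deriv (by ring)
    apply this.congr_of_eventuallyEq
    filter_upwards [eventually_lt_nhds h] with x hx
    rw [abs_of_neg hx]; ring
  · subst h
    rw [hasDerivAt_iff_tendsto_slope]
    have hs : ∀ x : ℝ, x ≠ 0 → slope (fun x : ℝ => x * |x|) 0 x = |x| := by
      intro x hx
      rw [slope_def_field]; field_simp
      simp only [zero_mul, abs_zero, sub_zero]; ring
    have habs : Filter.Tendsto (fun x : ℝ => |x|) (nhdsWithin 0 {(0:ℝ)}ᶜ)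
        (nhds (2 * |(0:ℝ)|)) := by
      simpa using (continuous_abs.tendsto 0).mono_left (nhdsWithin_le_nhds (s := {(0:ℝ)}ᶜ))
    apply habs.congr'
    filter_upwards [self_mem_nhdsWithin] with x hx
    exact ((hs x hx)).symm
  · have : HasDerivAt (fun x : ℝ => x * x) (2 * |y|) y := by
      rw [abs_of_pos h]
      exact ((hasDerivAt_id' y).mul (hasDerivAt_id' y)).congr_deriv (by ring)
    apply this.congr_of_eventuallyEq
    filter_upwards [eventually_gt_nhds h] with x hx
    rw [abs_of_pos hx]

lemma comparison_lemma {U u' : ℝ → ℝ} {k : ℝ} (hk : 0 < k) (hU0 : 0 ≤ U 0)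
    (hd : ∀ x ∈ Ici (0:ℝ), HasDerivWithinAt U (u' x) (Ici 0) x)
    (hb : ∀ x ∈ Ici (0:ℝ), u' x ≤ -(2*k) * Real.sqrt (U x)) :
    ∀ t ∈ Ici (0:ℝ), U t ≤ (max (Real.sqrt (U 0) - k*t) 0)^2 := by
  intro t ht
  have ht0 : (0:ℝ) ≤ t := ht
  have key : ∀ ε ∈ Ioi (0:ℝ), U t ≤ (max (Real.sqrt (U 0 + ε) - k*t) 0)^2 + ε := by
    intro ε hε
    have hε0 : (0:ℝ) < ε := hε
    set c := Real.sqrt (U 0 + ε) with hc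
    have hc0 : 0 ≤ c := Real.sqrt_nonneg _
    have hc2 : c^2 = U 0 + ε := Real.sq_sqrt (by linarith)
    set B : ℝ → ℝ := fun s => ((c - k*s) * |c - k*s| + (c - k*s)^2)/2 + ε with hB
    set B' : ℝ → ℝ := fun s => -k * (|c - k*s| + (c - k*s)) with hB'
    have hBmax : ∀ s, B s = (max (c - k*s) 0)^2 + ε := by
      intro s
      rcases le_total (c - k*s) 0 with h | h
      · rw [hB]; simp only; rw [max_eq_right h, abs_of_nonpos h]; ring
      · rw [hB]; simp only; rw [max_eq_left h, abs_of_nonneg h]; ring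
    have hBd : ∀ s, HasDerivAt B (B' s) s := by
      intro s
      have h1 : HasDerivAt (fun s : ℝ => c - k*s) (-k) s := by
        simpa using ((hasDerivAt_id s).const_mul k).const_sub c
      have h2 : HasDerivAt (fun s : ℝ => (c - k*s) * |c - k*s|)
          (2 * |c - k*s| * (-k)) s := by
          have := (hasDerivAt_mul_abs (c - k*s)).comp s h1; exact this
      have h3 : HasDerivAt (fun s : ℝ => (c - k*s)^2) (2*(c-k*s)*(-k)) s := by
        have := h1.pow 2
        refine this.congr_deriv ?_
        push_cast; ring
      have := ((h2.add h3).div_const 2).add_const ε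
      refine this.congr_deriv ?_
      simp only [hB']; ring
    have main := image_le_of_deriv_right_lt_deriv_boundary (a := 0) (b := t)
      (f := U) (f' := u') (B := B) (B' := B')
      (fun x hx => ((hd x hx.1).continuousWithinAt).mono (fun z hz => hz.1))
      (fun x hx => (hd x hx.1).mono (Ici_subset_Ici.2 hx.1))
      (by
        rw [hBmax 0]
        have h0 : max (c - k*0) 0 = c := by rw [mul_zero, sub_zero]; exact max_eq_left hc0
        rw [h0, hc2]; linarith)
      hBd
      (by
        intro x hx hUB
        have h1 := hb x hx.1
        have hmax0 : 0 ≤ max (c - k*x) 0 := le_max_right _ _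
        have hlt : max (c - k*x) 0 < Real.sqrt (U x) := by
          rw [hUB, hBmax x]
          calc max (c - k*x) 0 = Real.sqrt ((max (c - k*x) 0)^2) :=
                (Real.sqrt_sq hmax0).symm
            _ < Real.sqrt ((max (c - k*x) 0)^2 + ε) :=
                Real.sqrt_lt_sqrt (sq_nonneg _) (by linarith)
        have hBe : B' x = -(2*k) * max (c - k*x) 0 := by
          simp only [hB']
          rcases le_total (c - k*x) 0 with h | h
          · rw [max_eq_right h, abs_of_nonpos h]; ring
          · rw [max_eq_left h, abs_of_nonneg h]; ring
        rw [hBe]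
        have : -(2*k) * Real.sqrt (U x) < -(2*k) * max (c - k*x) 0 := by nlinarith
        linarith)
    have := main (right_mem_Icc.2 ht0)
    rw [hBmax t] at this
    exact this
  have tend : Filter.Tendsto (fun ε : ℝ => (max (Real.sqrt (U 0 + ε) - k*t) 0)^2 + ε)
      (nhdsWithin 0 (Ioi 0)) (nhds ((max (Real.sqrt (U 0) - k*t) 0)^2)) := by
    have hcont : Continuous (fun ε : ℝ => (max (Real.sqrt (U 0 + ε) - k*t) 0)^2 + ε) := by
      fun_prop
    have := hcont.tendsto 0
    simp only [add_zero] at this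
    exact this.mono_left nhdsWithin_le_nhds
  exact ge_of_tendsto tend (eventually_mem_nhdsWithin.mono key)

/-- finite-time decay of the average decision error: if `H` is invertible,
Assumption 1 holds, and `Ĝ(t) = H·θ̃(t)` solves the average closed-loop pseudogradient
dynamics, then `‖θ̃(t)‖ ≤ max (‖H⁻¹‖‖H‖‖θ̃(0)‖ − ‖H⁻¹‖(α₀/ω)t) 0` for all `t ≥ 0`; in
particular `θ̃(t) = 0` for all `t ≥ ω‖H‖‖θ̃(0)‖/α₀`. The Euclidean norm of
`(x₁, x₂) ∈ ℝ²` is written `√(x₁² + x₂²)` and matrix norms are the induced operator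
norms. -/
theorem finite_time_decay_decision_error
    (H111 H112 H221 H222 K1 K2 ω : ℝ) (hω : 0 < ω)
    (hinv : (!![H111, H112; H221, H222]).det ≠ 0)
    (hdd1 : |H112 * K2| < |H111 * K1|) (hdd2 : |H221 * K1| < |H222 * K2|)
    (hneg1 : H111 * K1 < 0) (hneg2 : H222 * K2 < 0)
    (α0 : ℝ) (hα0 : α0 = min (|H111 * K1| - |H112 * K2|) (|H222 * K2| - |H221 * K1|))
    (θ1 θ2 G1 G2 : ℝ → ℝ)
    (hG1 : ∀ t : ℝ, G1 t = H111 * θ1 t + H112 * θ2 t)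
    (hG2 : ∀ t : ℝ, G2 t = H221 * θ1 t + H222 * θ2 t)
    (hode1 : ∀ t ∈ Ici (0 : ℝ), HasDerivWithinAt G1
      ((1 / ω) * (H111 * K1 * Real.sign (G1 t) + H112 * K2 * Real.sign (G2 t))) (Ici 0) t)
    (hode2 : ∀ t ∈ Ici (0 : ℝ), HasDerivWithinAt G2
      ((1 / ω) * (H221 * K1 * Real.sign (G1 t) + H222 * K2 * Real.sign (G2 t))) (Ici 0) t) :
    (∀ t ∈ Ici (0 : ℝ),
      Real.sqrt (θ1 t ^ 2 + θ2 t ^ 2)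
        ≤ max (euclOpNorm (!![H111, H112; H221, H222])⁻¹
                 * euclOpNorm (!![H111, H112; H221, H222])
                 * Real.sqrt (θ1 0 ^ 2 + θ2 0 ^ 2)
               - euclOpNorm (!![H111, H112; H221, H222])⁻¹ * (α0 / ω) * t) 0) ∧
    (∀ t : ℝ,
      ω * euclOpNorm (!![H111, H112; H221, H222]) * Real.sqrt (θ1 0 ^ 2 + θ2 0 ^ 2) / α0 ≤ t →
      θ1 t = 0 ∧ θ2 t = 0) := by
  set H : Matrix (Fin 2) (Fin 2) ℝ := !![H111, H112; H221, H222] with hH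
  set a : ℝ := H111 * K1
  set b : ℝ := H112 * K2
  set c2 : ℝ := H221 * K1
  set d : ℝ := H222 * K2
  set N := euclOpNorm H with hN
  set Ninv := euclOpNorm H⁻¹ with hNinv
  have hN0 : 0 ≤ N := norm_nonneg _
  have hNinv0 : 0 ≤ Ninv := norm_nonneg _
  have hα0pos : 0 < α0 := by
    rw [hα0]; exact lt_min (by linarith) (by linarith)
  set k := α0 / ω with hk
  have hkpos : 0 < k := div_pos hα0pos hω
  set U : ℝ → ℝ := fun s => G1 s ^ 2 + G2 s ^ 2 with hU
  set u' : ℝ → ℝ := fun s =>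
    2 * G1 s * ((1 / ω) * (a * Real.sign (G1 s) + b * Real.sign (G2 s)))
      + 2 * G2 s * ((1 / ω) * (c2 * Real.sign (G1 s) + d * Real.sign (G2 s))) with hu'
  have hUd : ∀ x ∈ Ici (0:ℝ), HasDerivWithinAt U (u' x) (Ici 0) x := by
    intro x hx
    have h := ((hode1 x hx).pow 2).add ((hode2 x hx).pow 2)
    refine h.congr_deriv ?_
    simp only [hu']
    push_cast
    ring
  have hUb : ∀ x ∈ Ici (0:ℝ), u' x ≤ -(2*k) * Real.sqrt (U x) := by
    intro x _
    set p := G1 x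
    set q := G2 x
    have hα1 : α0 ≤ -a - |b| := by
      have := min_le_left (|a| - |b|) (|d| - |c2|)
      rw [← hα0] at this
      rw [abs_of_neg hneg1] at this
      linarith
    have hα2 : α0 ≤ -d - |c2| := by
      have := min_le_right (|a| - |b|) (|d| - |c2|)
      rw [← hα0] at this
      rw [abs_of_neg hneg2] at this
      linarith
    have core : 2 * (p * (a * Real.sign p + b * Real.sign q)
        + q * (c2 * Real.sign p + d * Real.sign q))
        ≤ -(2*α0) * Real.sqrt (p^2 + q^2) := by
      have e1 : p * Real.sign p = |p| := mul_sign' p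
      have e2 : q * Real.sign q = |q| := mul_sign' q
      have f1 : b * (p * Real.sign q) ≤ |b| * |p| := mul_sign_le b p q
      have f2 : c2 * (q * Real.sign p) ≤ |c2| * |q| := mul_sign_le c2 q p
      have g1 : a * |p| + |b| * |p| ≤ -α0 * |p| := by
        have hp : 0 ≤ |p| := abs_nonneg p
        nlinarith
      have g2 : d * |q| + |c2| * |q| ≤ -α0 * |q| := by
        have hq : 0 ≤ |q| := abs_nonneg q
        nlinarith
      have hs : Real.sqrt (p^2 + q^2) ≤ |p| + |q| := sqrt_le_abs_add_abs p q
      have hss : α0 * Real.sqrt (p^2 + q^2) ≤ α0 * (|p| + |q|) :=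
        mul_le_mul_of_nonneg_left hs (le_of_lt hα0pos)
      have expand : 2 * (p * (a * Real.sign p + b * Real.sign q)
          + q * (c2 * Real.sign p + d * Real.sign q))
          = 2 * (a * (p * Real.sign p) + b * (p * Real.sign q)
            + c2 * (q * Real.sign p) + d * (q * Real.sign q)) := by ring
      rw [expand, e1, e2]
      linarith
    have lhs_eq : u' x = (1/ω) * (2 * (p * (a * Real.sign p + b * Real.sign q)
        + q * (c2 * Real.sign p + d * Real.sign q))) := by
      simp only [hu']; ring
    have rhs_eq : -(2*k) * Real.sqrt (U x) = (1/ω) * (-(2*α0) * Real.sqrt (p^2 + q^2)) := by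
      simp only [hU, hk]
      field_simp
      rfl
    rw [lhs_eq, rhs_eq]
    exact mul_le_mul_of_nonneg_left core (by positivity)
  have hU0 : 0 ≤ U 0 := by positivity
  have hcomp := comparison_lemma hkpos hU0 hUd hUb
  -- vector identities
  have hGvec : ∀ t, H.mulVec ![θ1 t, θ2 t] = ![G1 t, G2 t] := by
    intro t
    rw [mulVec_two]
    rw [hG1 t, hG2 t]
    congr 1 <;> simp [hH]
  have hθvec : ∀ t, H⁻¹.mulVec ![G1 t, G2 t] = ![θ1 t, θ2 t] := by
    intro t
    rw [← hGvec t, Matrix.mulVec_mulVec, Matrix.nonsing_inv_mul H (isUnit_iff_ne_zero.2 hinv),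
      Matrix.one_mulVec]
  -- norm bounds
  have hθ_le : ∀ t, Real.sqrt (θ1 t ^ 2 + θ2 t ^ 2) ≤ Ninv * Real.sqrt (U t) := by
    intro t
    have h := mulVec_norm_le H⁻¹ (G1 t) (G2 t)
    rw [hθvec t] at h
    simpa [hU] using h
  have hG0_le : Real.sqrt (U 0) ≤ N * Real.sqrt (θ1 0 ^ 2 + θ2 0 ^ 2) := by
    have h := mulVec_norm_le H (θ1 0) (θ2 0)
    rw [hGvec 0] at h
    simpa [hU] using h
  have part1 : ∀ t ∈ Ici (0:ℝ),
      Real.sqrt (θ1 t ^ 2 + θ2 t ^ 2)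
        ≤ max (Ninv * N * Real.sqrt (θ1 0 ^ 2 + θ2 0 ^ 2) - Ninv * (α0/ω) * t) 0 := by
    intro t ht
    have hUt := hcomp t ht
    have hMnn : 0 ≤ max (Real.sqrt (U 0) - k*t) 0 := le_max_right _ _
    have hsq : Real.sqrt (U t) ≤ max (Real.sqrt (U 0) - k*t) 0 := by
      calc Real.sqrt (U t) ≤ Real.sqrt ((max (Real.sqrt (U 0) - k*t) 0)^2) :=
            Real.sqrt_le_sqrt hUt
        _ = max (Real.sqrt (U 0) - k*t) 0 := Real.sqrt_sq hMnn
    have step1 : Real.sqrt (θ1 t ^ 2 + θ2 t ^ 2)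
        ≤ Ninv * max (Real.sqrt (U 0) - k*t) 0 :=
      le_trans (hθ_le t) (mul_le_mul_of_nonneg_left hsq hNinv0)
    have step2 : Ninv * max (Real.sqrt (U 0) - k*t) 0
        ≤ Ninv * max (N * Real.sqrt (θ1 0 ^ 2 + θ2 0 ^ 2) - k*t) 0 := by
      apply mul_le_mul_of_nonneg_left _ hNinv0
      exact max_le_max (by linarith) le_rfl
    have step3 : Ninv * max (N * Real.sqrt (θ1 0 ^ 2 + θ2 0 ^ 2) - k*t) 0
        = max (Ninv * N * Real.sqrt (θ1 0 ^ 2 + θ2 0 ^ 2) - Ninv * (α0/ω) * t) 0 := by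
      rw [mul_max_of_nonneg _ _ hNinv0, mul_zero]
      congr 1
      rw [hk]; ring
    linarith [step1, step2, step3.le, step3.ge]
  constructor
  · exact part1
  · intro t htt
    have hthr : 0 ≤ ω * N * Real.sqrt (θ1 0 ^ 2 + θ2 0 ^ 2) / α0 := by positivity
    have ht0 : (0:ℝ) ≤ t := le_trans hthr htt
    have h1 := part1 t ht0
    have hzero : Ninv * N * Real.sqrt (θ1 0 ^ 2 + θ2 0 ^ 2) - Ninv * (α0/ω) * t ≤ 0 := by
      have h2 : ω * N * Real.sqrt (θ1 0 ^ 2 + θ2 0 ^ 2) ≤ α0 * t := by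
        rw [div_le_iff₀ hα0pos] at htt
        linarith
      have h3 : N * Real.sqrt (θ1 0 ^ 2 + θ2 0 ^ 2) - (α0/ω) * t ≤ 0 := by
        rw [sub_nonpos, div_mul_eq_mul_div, le_div_iff₀ hω]
        nlinarith [h2]
      calc Ninv * N * Real.sqrt (θ1 0 ^ 2 + θ2 0 ^ 2) - Ninv * (α0/ω) * t
          = Ninv * (N * Real.sqrt (θ1 0 ^ 2 + θ2 0 ^ 2) - (α0/ω) * t) := by ring
        _ ≤ 0 := mul_nonpos_of_nonneg_of_nonpos hNinv0 h3
    rw [max_eq_right hzero] at h1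
    have hle0 : Real.sqrt (θ1 t ^ 2 + θ2 t ^ 2) = 0 :=
      le_antisymm h1 (Real.sqrt_nonneg _)
    have hsum : θ1 t ^ 2 + θ2 t ^ 2 ≤ 0 := by
      rwa [Real.sqrt_eq_zero'] at hle0
    have h1z : θ1 t ^ 2 = 0 :=
      le_antisymm (by linarith [sq_nonneg (θ2 t)]) (sq_nonneg _)
    have h2z : θ2 t ^ 2 = 0 :=
      le_antisymm (by linarith [sq_nonneg (θ1 t)]) (sq_nonneg _)
    exact ⟨(pow_eq_zero_iff (two_ne_zero)).mp h1z, (pow_eq_zero_iff (two_ne_zero)).mp h2z⟩
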